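/- arXiv:2109.09629 — 3 statements merged into one kernel-verified Lean document; each statement's English description precedes it below -/
import Mathlib

section
/- Let n ≥ 1, d = 2^n, and let Γ = Σ_k (ψ_k ψ_k†)^T ⊗ (ψ_k ψ_k†) be built from tensor products ψ_k = ψ_{1,k_1} ⊗ ⋯ ⊗ ψ_{n,k_n} of single-qubit SIC-POVM states. Then Γ is a Hermitian positive semidefinite d²×d² matrix whose largest eigenvalue is d with multiplicity 1, whose second largest eigenvalue is d/3 with multiplicity 3n, and all of whose remaining eigenvalues are strictly less than d/3. -/
open Matrix Polynomial
open scoped Kronecker ComplexOrder Classical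

noncomputable section

/-- Hermitian inner product on `m → ℂ`, conjugate-linear in the first argument. -/
def cinner {m : Type*} [Fintype m] (v w : m → ℂ) : ℂ :=
  ∑ a, (starRingEnd ℂ) (v a) * w a

/-- A single-qubit SIC-POVM: four unit vectors in ℂ² with pairwise squared overlaps 1/3. -/
def IsSICPOVM (ψ : Fin 4 → Fin 2 → ℂ) : Prop :=
  (∀ k, cinner (ψ k) (ψ k) = 1) ∧
  ∀ k k', k ≠ k' → ‖cinner (ψ k) (ψ k')‖ ^ 2 = 1 / 3

/-- Tensor product state `ψ_k = ψ_{1,k_1} ⊗ ⋯ ⊗ ψ_{n,k_n}` on `ℂ^(2^n)`,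
    whose coordinates are indexed by `Fin n → Fin 2`. -/
def prodState {n : ℕ} (ψ : Fin n → Fin 4 → Fin 2 → ℂ) (k : Fin n → Fin 4) :
    (Fin n → Fin 2) → ℂ :=
  fun x => ∏ i, ψ i (k i) (x i)

/-- The rank-one projector `ψψ†` onto a vector. -/
def proj {m : Type*} (v : m → ℂ) : Matrix m m ℂ :=
  Matrix.vecMulVec v (star v)

/-- The matrix `Γ = Σ_k (ψ_k ψ_k†)ᵀ ⊗ (ψ_k ψ_k†)`. -/
def Gam {n : ℕ} (ψ : Fin n → Fin 4 → Fin 2 → ℂ) :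
    Matrix ((Fin n → Fin 2) × (Fin n → Fin 2)) ((Fin n → Fin 2) × (Fin n → Fin 2)) ℂ :=
  ∑ k : Fin n → Fin 4, (proj (prodState ψ k))ᵀ ⊗ₖ proj (prodState ψ k)

/-- The maximally entangled vector `φ = (1/√d) Σ_x e_x ⊗ e_x`, `d = 2^n`. -/
def maxEnt (n : ℕ) : (Fin n → Fin 2) × (Fin n → Fin 2) → ℂ :=
  fun p => if p.1 = p.2 then (((Real.sqrt (2 ^ n))⁻¹ : ℝ) : ℂ) else 0

open Finset

/-!
A qubit SIC-POVM is a 2-design: `∑ₖ (ψₖψₖ†)ᵀ ⊗ ψₖψₖ† = (2/3)(1 + ωω†)` with `ω = e₀₀ + e₁₁`.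
Indeed, the squared Frobenius distance between the two sides expands to
`∑ₖₖ' |⟨ψₖ, ψₖ'⟩|⁴ - (8/3) ∑ₖ ‖ψₖ‖⁴ + 16/3`, which vanishes for a SIC. As `Γ` is the tensor product
of these single-qubit matrices, it is diagonalised by the `n`-th tensor power of the Bell basis, with
eigenvalue 2 on `ω` and 2/3 on its orthogonal complement. So the eigenvalues of `Γ` are `2ⁿ / 3ʷ`,
where `w` is the number of tensor factors carrying a label other than `ω`; there is one label with
`w = 0` and there are `3n` labels with `w = 1`.
-/

namespace Matrix

variable {ι m n p R : Type*} [Fintype ι]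

def piKron [CommMonoid R] (A : ι → Matrix m n R) : Matrix (ι → m) (ι → n) R :=
  of fun x y => ∏ i, A i (x i) (y i)

@[simp]
lemma piKron_apply [CommMonoid R] (A : ι → Matrix m n R) (x : ι → m) (y : ι → n) :
    piKron A x y = ∏ i, A i (x i) (y i) :=
  rfl

lemma piKron_mul_piKron [CommSemiring R] [DecidableEq ι] [Fintype n]
    (A : ι → Matrix m n R) (B : ι → Matrix n p R) :
    piKron A * piKron B = piKron fun i => A i * B i := by
  ext x z
  simp only [mul_apply, piKron_apply, ← prod_mul_distrib, Fintype.prod_sum]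

lemma piKron_diagonal [CommMonoidWithZero R] [DecidableEq m] (d : ι → m → R) :
    piKron (fun i => diagonal (d i)) = diagonal fun x => ∏ i, d i (x i) := by
  ext x y
  by_cases h : x = y
  · simp [h]
  · obtain ⟨i, hi⟩ := Function.ne_iff.mp h
    rw [diagonal_apply_ne _ h, piKron_apply]
    exact prod_eq_zero (mem_univ i) (diagonal_apply_ne _ hi)

lemma piKron_one [CommMonoidWithZero R] [DecidableEq m] :
    piKron (fun _ : ι => (1 : Matrix m m R)) = 1 := by
  simpa using piKron_diagonal (ι := ι) fun _ (_ : m) => (1 : R)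

lemma charpoly_eq_of_mul_eq_mul [CommRing R] [Fintype n] [DecidableEq n] {A D U V : Matrix n n R}
    (hVU : V * U = 1) (h : A * U = U * D) : A.charpoly = D.charpoly := by
  have hA : A = U * (D * V) := by
    rw [← mul_assoc, ← h, mul_assoc, mul_eq_one_comm.mp hVU, mul_one]
  rw [hA, charpoly_mul_comm, mul_assoc, hVU, mul_one]

lemma IsHermitian.eigenvalues_map_eq_of_charpoly_eq [Fintype n] [DecidableEq n]
    {A : Matrix n n ℂ} (hA : A.IsHermitian) {d : ι → ℝ} (h : A.charpoly = ∏ i, (X - C (d i : ℂ))) :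
    univ.val.map hA.eigenvalues = univ.val.map d := by
  apply Multiset.map_injective Complex.ofReal_injective
  rw [Multiset.map_map, ← RCLike.ofReal_eq_complex_ofReal, ← hA.roots_charpoly_eq_eigenvalues, h,
    Polynomial.roots_prod _ _ (prod_ne_zero_iff.mpr fun i _ => X_sub_C_ne_zero _)]
  simp [Multiset.map_map]

end Matrix

section MultisetMap

variable {α β γ : Type*} [Fintype α] [Fintype γ] {f : α → β} {g : γ → β}

lemma card_filter_eq_of_map_univ_eq [DecidableEq β] (h : univ.val.map f = univ.val.map g) (b : β) :
    #{a | f a = b} = #{c | g c = b} := by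
  have := congrArg (Multiset.count b) h
  rw [Multiset.count_map, Multiset.count_map] at this
  simp only [card_def, filter_val, @eq_comm _ _ b]
  convert this

lemma exists_eq_of_map_univ_eq (h : univ.val.map f = univ.val.map g) (a : α) : ∃ c, g c = f a := by
  simpa [h] using Multiset.mem_map_of_mem f (mem_univ_val a)

end MultisetMap

section HammingNorm

variable {ι β : Type*} [Fintype ι] [DecidableEq ι] [DecidableEq β] [Zero β]

lemma hammingNorm_single {i : ι} {b : β} (hb : b ≠ 0) : hammingNorm (Pi.single i b : ι → β) = 1 := by
  rw [hammingNorm, card_eq_one]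
  exact ⟨i, by ext j; by_cases h : j = i <;> simp [h, hb]⟩

lemma hammingNorm_eq_one_iff {x : ι → β} :
    hammingNorm x = 1 ↔ ∃ i, x i ≠ 0 ∧ Pi.single i (x i) = x := by
  refine ⟨fun hx => ?_, fun ⟨i, hi, hx⟩ => hx ▸ hammingNorm_single hi⟩
  obtain ⟨i, hsupp⟩ := card_eq_one.mp hx
  have hmem (j) : x j ≠ 0 ↔ j = i := by simpa using congrArg (j ∈ ·) hsupp
  refine ⟨i, (hmem i).mpr rfl, funext fun j => ?_⟩
  by_cases h : j = i
  · subst h; simp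
  · simpa [h, eq_comm] using (not_congr (hmem j)).mpr h

variable [Fintype β]

lemma card_hammingNorm_eq_zero : #{x : ι → β | hammingNorm x = 0} = 1 := by
  simp [hammingNorm_eq_zero, filter_eq']

lemma card_hammingNorm_eq_one :
    #{x : ι → β | hammingNorm x = 1} = Fintype.card ι * (Fintype.card β - 1) := by
  have himage : ({x : ι → β | hammingNorm x = 1} : Finset (ι → β))
      = univ.image fun p : ι × {b : β // b ≠ 0} => (Pi.single p.1 p.2.1 : ι → β) := by
    ext x
    simp only [mem_filter, mem_univ, true_and, mem_image, hammingNorm_eq_one_iff, Prod.exists,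
      Subtype.exists]
    exact ⟨fun ⟨i, hi, hx⟩ => ⟨i, x i, hi, hx⟩, fun ⟨i, b, hb, hx⟩ => ⟨i, by simp [← hx, hb]⟩⟩
  have hinj : Function.Injective fun p : ι × {b : β // b ≠ 0} => (Pi.single p.1 p.2.1 : ι → β) := by
    rintro ⟨i, b, hb⟩ ⟨j, c, hc⟩ h
    have hij : i = j := by
      by_contra hij
      exact hb (by simpa [hij] using congrFun h i)
    subst hij
    simpa using Pi.single_injective i h
  rw [himage, card_image_of_injective _ hinj, card_univ, Fintype.card_prod,
    Fintype.card_subtype_compl, Fintype.card_subtype_eq]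

end HammingNorm

lemma cinner_conj_symm {m : Type*} [Fintype m] (v w : m → ℂ) :
    starRingEnd ℂ (cinner w v) = cinner v w := by
  simp [cinner, mul_comm]

def kronFrame {κ m : Type*} [Fintype κ] (φ : κ → m → ℂ) : Matrix (m × m) (m × m) ℂ :=
  ∑ k, (proj (φ k))ᵀ ⊗ₖ proj (φ k)

lemma kronFrame_apply {κ m : Type*} [Fintype κ] (φ : κ → m → ℂ) (x y : m × m) :
    kronFrame φ x y
      = ∑ k, φ k y.1 * starRingEnd ℂ (φ k x.1) * (φ k x.2 * starRingEnd ℂ (φ k y.2)) := by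
  simp only [kronFrame, Matrix.sum_apply, kroneckerMap_apply, transpose_apply, proj,
    vecMulVec_apply, Pi.star_apply, RCLike.star_def]

def sicKronFrame : Matrix (Fin 2 × Fin 2) (Fin 2 × Fin 2) ℂ :=
  of fun x y => 2 / 3 * ((if x = y then 1 else 0) + if x.1 = x.2 ∧ y.1 = y.2 then 1 else 0)

lemma sum_kronFrame_sub_sicKronFrame_mul_conj (φ : Fin 4 → Fin 2 → ℂ) :
    ∑ x, ∑ y, (kronFrame φ x y - sicKronFrame x y) *
        starRingEnd ℂ (kronFrame φ x y - sicKronFrame x y)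
      = ∑ k, ∑ k', (cinner (φ k) (φ k') * cinner (φ k') (φ k)) ^ 2
        - 8 / 3 * ∑ k, cinner (φ k) (φ k) ^ 2 + 16 / 3 := by
  simp only [kronFrame_apply, sicKronFrame, of_apply, cinner, Fintype.sum_prod_type,
    Fin.sum_univ_two, Fin.sum_univ_four, map_mul, map_sub, map_add, map_div₀, map_ofNat,
    map_one, map_zero, apply_ite (starRingEnd ℂ), Complex.conj_conj]
  norm_num
  ring

lemma IsSICPOVM.cinner_mul_cinner {φ : Fin 4 → Fin 2 → ℂ} (hφ : IsSICPOVM φ) {k k' : Fin 4}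
    (h : k ≠ k') : cinner (φ k) (φ k') * cinner (φ k') (φ k) = 1 / 3 := by
  rw [← cinner_conj_symm (φ k') (φ k), Complex.mul_conj, Complex.normSq_eq_norm_sq, hφ.2 k k' h]
  norm_num

lemma IsSICPOVM.frame_potential_eq {φ : Fin 4 → Fin 2 → ℂ} (hφ : IsSICPOVM φ) :
    ∑ k, ∑ k', (cinner (φ k) (φ k') * cinner (φ k') (φ k)) ^ 2 = 16 / 3 := by
  have hterm (k k' : Fin 4) : (cinner (φ k) (φ k') * cinner (φ k') (φ k)) ^ 2
      = if k = k' then 1 else 1 / 9 := by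
    split_ifs with h
    · simp [h, hφ.1]
    · rw [hφ.cinner_mul_cinner h]; norm_num
  simp [hterm, Fin.sum_univ_four]
  norm_num

lemma IsSICPOVM.kronFrame_eq {φ : Fin 4 → Fin 2 → ℂ} (hφ : IsSICPOVM φ) :
    kronFrame φ = sicKronFrame := by
  have hzero : ∑ x, ∑ y, Complex.normSq (kronFrame φ x y - sicKronFrame x y) = 0 := by
    have : ∑ x, ∑ y, (Complex.normSq (kronFrame φ x y - sicKronFrame x y) : ℂ) = 0 := by
      simp only [← Complex.mul_conj]
      rw [sum_kronFrame_sub_sicKronFrame_mul_conj, hφ.frame_potential_eq]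
      simp [hφ.1]
      norm_num
    exact_mod_cast this
  ext x y
  rw [← sub_eq_zero, ← Complex.normSq_eq_zero]
  exact (sum_eq_zero_iff_of_nonneg fun _ _ => Complex.normSq_nonneg _).mp
    ((sum_eq_zero_iff_of_nonneg fun _ _ => sum_nonneg fun _ _ => Complex.normSq_nonneg _).mp hzero x
      (mem_univ _)) y (mem_univ _)

-- `finProdFinEquiv` orders `Fin 2 × Fin 2` as `00, 01, 10, 11`; the columns of `bellBasis` are
-- `ω = e₀₀ + e₁₁, e₀₁, e₁₀, e₀₀ - e₁₁`.
def bellBasis : Matrix (Fin 2 × Fin 2) (Fin 2 × Fin 2) ℂ :=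
  (!![1, 0, 0, 1; 0, 1, 0, 0; 0, 0, 1, 0; 1, 0, 0, -1] : Matrix (Fin 4) (Fin 4) ℂ).submatrix
    finProdFinEquiv finProdFinEquiv

def bellBasisInv : Matrix (Fin 2 × Fin 2) (Fin 2 × Fin 2) ℂ :=
  (!![1/2, 0, 0, 1/2; 0, 1, 0, 0; 0, 0, 1, 0; 1/2, 0, 0, -1/2] : Matrix (Fin 4) (Fin 4) ℂ).submatrix
    finProdFinEquiv finProdFinEquiv

def sicEigenvalue (l : Fin 2 × Fin 2) : ℝ := if l = 0 then 2 else 2 / 3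

lemma bellBasisInv_mul_bellBasis : bellBasisInv * bellBasis = 1 := by
  ext ⟨a, b⟩ ⟨c, d⟩
  fin_cases a <;> fin_cases b <;> fin_cases c <;> fin_cases d <;>
    norm_num [mul_apply, Fintype.sum_prod_type, bellBasis, bellBasisInv, finProdFinEquiv, one_apply]

lemma sicKronFrame_mul_bellBasis :
    sicKronFrame * bellBasis = bellBasis * diagonal fun l => (sicEigenvalue l : ℂ) := by
  ext ⟨a, b⟩ ⟨c, d⟩
  fin_cases a <;> fin_cases b <;> fin_cases c <;> fin_cases d <;>
    norm_num [mul_apply, Fintype.sum_prod_type, bellBasis, sicKronFrame, sicEigenvalue,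
      finProdFinEquiv]

lemma prod_sicEigenvalue {ι : Type*} [Fintype ι] (x : ι → Fin 2 × Fin 2) :
    ∏ i, sicEigenvalue (x i) = 2 ^ Fintype.card ι / 3 ^ hammingNorm x := by
  have hfactor (i : ι) : sicEigenvalue (x i) = 2 / 3 ^ (if x i ≠ 0 then 1 else 0) := by
    by_cases h : x i = 0 <;> simp [sicEigenvalue, h]
  simp only [hfactor, prod_div_distrib, prod_const, card_univ, prod_pow_eq_pow_sum, ← card_filter,
    hammingNorm]

lemma Gam_posSemidef {n : ℕ} (ψ : Fin n → Fin 4 → Fin 2 → ℂ) : (Gam ψ).PosSemidef :=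
  posSemidef_sum univ fun _ _ =>
    (posSemidef_vecMulVec_self_star _).transpose.kronecker (posSemidef_vecMulVec_self_star _)

lemma Gam_eq_submatrix_piKron {n : ℕ} (ψ : Fin n → Fin 4 → Fin 2 → ℂ) :
    Gam ψ = (piKron fun i => kronFrame (ψ i)).submatrix
      (Equiv.arrowProdEquivProdArrow _ _ _).symm (Equiv.arrowProdEquivProdArrow _ _ _).symm := by
  ext p q
  simp only [Gam, Matrix.sum_apply, kroneckerMap_apply, transpose_apply, proj, vecMulVec_apply,
    prodState, Pi.star_apply, RCLike.star_def, map_prod, submatrix_apply, piKron_apply,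
    kronFrame_apply, Fintype.prod_sum]
  refine sum_congr rfl fun k _ => ?_
  simp only [← prod_mul_distrib]
  rfl

lemma Gam_charpoly {n : ℕ} {ψ : Fin n → Fin 4 → Fin 2 → ℂ} (hψ : ∀ i, IsSICPOVM (ψ i)) :
    (Gam ψ).charpoly
      = ∏ x : Fin n → Fin 2 × Fin 2, (X - C ((∏ i, sicEigenvalue (x i) : ℝ) : ℂ)) := by
  have hVU : (piKron fun _ : Fin n => bellBasisInv) * piKron (fun _ => bellBasis) = 1 := by
    rw [piKron_mul_piKron, bellBasisInv_mul_bellBasis, piKron_one]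
  have hdiag : (piKron fun _ : Fin n => sicKronFrame) * piKron (fun _ => bellBasis)
      = piKron (fun _ => bellBasis) * diagonal fun x => ∏ i, (sicEigenvalue (x i) : ℂ) := by
    rw [piKron_mul_piKron, sicKronFrame_mul_bellBasis, ← piKron_mul_piKron, piKron_diagonal]
  rw [Gam_eq_submatrix_piKron, ← reindex_apply, charpoly_reindex,
    funext fun i => (hψ i).kronFrame_eq, charpoly_eq_of_mul_eq_mul hVU hdiag, charpoly_diagonal]
  push_cast
  rfl

theorem Gam_spectrum_general (n : ℕ)
    (ψ : Fin n → Fin 4 → Fin 2 → ℂ) (hψ : ∀ i, IsSICPOVM (ψ i)) :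
    ∃ hΓ : (Gam ψ).IsHermitian,
      (Gam ψ).PosSemidef ∧
      (∀ i, hΓ.eigenvalues i ≤ 2 ^ n) ∧
      (Finset.univ.filter fun i => hΓ.eigenvalues i = 2 ^ n).card = 1 ∧
      (Finset.univ.filter fun i => hΓ.eigenvalues i = 2 ^ n / 3).card = 3 * n ∧
      (∀ i, hΓ.eigenvalues i ≠ 2 ^ n → hΓ.eigenvalues i ≠ 2 ^ n / 3 →
        hΓ.eigenvalues i < 2 ^ n / 3) := by
  have hpsd := Gam_posSemidef ψ
  let hΓ := hpsd.isHermitian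
  have hspec : univ.val.map hΓ.eigenvalues
      = univ.val.map fun x : Fin n → Fin 2 × Fin 2 => (2 : ℝ) ^ n / 3 ^ hammingNorm x := by
    rw [hΓ.eigenvalues_map_eq_of_charpoly_eq (Gam_charpoly hψ)]
    simp only [prod_sicEigenvalue, Fintype.card_fin]
  have hanti : StrictAnti fun w : ℕ => (2 : ℝ) ^ n / 3 ^ w := fun _ _ h =>
    div_lt_div_of_pos_left (by positivity) (by positivity) (pow_lt_pow_right₀ (by norm_num) h)
  have hcount (w : ℕ) : #{i | hΓ.eigenvalues i = 2 ^ n / 3 ^ w}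
      = #{x : Fin n → Fin 2 × Fin 2 | hammingNorm x = w} := by
    rw [card_filter_eq_of_map_univ_eq hspec]
    simp only [hanti.injective.eq_iff]
  refine ⟨hΓ, hpsd, fun i => ?_, by simpa using (hcount 0).trans card_hammingNorm_eq_zero,
    by simpa [mul_comm] using (hcount 1).trans card_hammingNorm_eq_one, fun i h0 h1 => ?_⟩
  · obtain ⟨x, hx⟩ := exists_eq_of_map_univ_eq hspec i
    simpa [← hx] using hanti.antitone (Nat.zero_le (hammingNorm x))
  · obtain ⟨x, hx⟩ := exists_eq_of_map_univ_eq hspec i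
    rw [← hx] at h0 h1 ⊢
    have h0' : hammingNorm x ≠ 0 := fun h => h0 (by simp [h])
    have h1' : hammingNorm x ≠ 1 := fun h => h1 (by simp [h])
    simpa using hanti (show 1 < hammingNorm x by omega)

/-- Spectrum of `Γ`: it is Hermitian positive semidefinite, the largest eigenvalue is
    `d = 2^n` with multiplicity 1, the second largest is `d/3` with multiplicity `3n`,
    and all remaining eigenvalues are strictly less than `d/3`. -/
theorem Gam_spectrum (n : ℕ) (hn : 1 ≤ n)
    (ψ : Fin n → Fin 4 → Fin 2 → ℂ) (hψ : ∀ i, IsSICPOVM (ψ i)) :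
    ∃ hΓ : (Gam ψ).IsHermitian,
      (Gam ψ).PosSemidef ∧
      (∀ i, hΓ.eigenvalues i ≤ 2 ^ n) ∧
      (Finset.univ.filter fun i => hΓ.eigenvalues i = 2 ^ n).card = 1 ∧
      (Finset.univ.filter fun i => hΓ.eigenvalues i = 2 ^ n / 3).card = 3 * n ∧
      (∀ i, hΓ.eigenvalues i ≠ 2 ^ n → hΓ.eigenvalues i ≠ 2 ^ n / 3 →
        hΓ.eigenvalues i < 2 ^ n / 3) :=
  Gam_spectrum_general n ψ hψ
end
end

section
/- Let n ≥ 1, d = 2^n, let Γ = Σ_k (ψ_k ψ_k†)^T ⊗ (ψ_k ψ_k†) be built from tensor products ψ_k = ψ_{1,k_1} ⊗ ⋯ ⊗ ψ_{n,k_n} of single-qubit SIC-POVM states, and let φ = (1/√d) Σ_{x=1}^d e_x ⊗ e_x ∈ ℂ^{d²}. Then Γ φ = d·φ, i.e., φ is an eigenvector of Γ with eigenvalue d. -/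
open Matrix Polynomial
open scoped Kronecker ComplexOrder Classical

noncomputable section

/-!
Write `φ = d^{-1/2} vec 1`. Since `(Pᵀ ⊗ P) vec X = vec (P X P)` and each `P_k = ψ_k ψ_k†` is
idempotent, `Γ φ = d^{-1/2} vec (Σ_k P_k)`, so it suffices that the product states form a tight
frame, `Σ_k P_k = d · 1`. This tensorizes from the single-qubit identity `Σ_k ψ_k ψ_k† = 2 · 1`,
which holds for any SIC in dimension `m`: for `S = Σ_k ψ_k ψ_k†` the overlaps give
`tr S = m²` and `tr S² = m³`, so the Hilbert–Schmidt norm `tr (S - m)²` of the Hermitian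
matrix `S - m` vanishes.
-/

lemma conjTranspose_proj {m : Type*} (v : m → ℂ) : (proj v)ᴴ = proj v := by
  simp [proj, conjTranspose_vecMulVec]

section RankOne

variable {m : Type*} [Fintype m]

lemma trace_proj (v : m → ℂ) : (proj v).trace = cinner v v := by
  rw [proj, trace_vecMulVec, dotProduct_comm]
  rfl

lemma trace_proj_mul_proj (v w : m → ℂ) :
    (proj v * proj w).trace = (‖cinner v w‖ : ℂ) ^ 2 := by
  have hconj : v ⬝ᵥ star w = starRingEnd ℂ (cinner v w) := by
    simp [cinner, dotProduct, map_sum, mul_comm]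
  rw [proj, proj, vecMulVec_mul_vecMulVec, trace_vecMulVec, dotProduct_smul, hconj,
    ← Complex.mul_conj', smul_eq_mul]
  rfl

lemma proj_mul_self {v : m → ℂ} (hv : cinner v v = 1) : proj v * proj v = proj v := by
  rw [proj, vecMulVec_mul_vecMulVec, show star v ⬝ᵥ v = 1 from hv, one_smul]

end RankOne

theorem sum_proj_eq_smul_one_of_equiangular {ι m : Type*} [Fintype ι] [Fintype m]
    [DecidableEq m] (ψ : ι → m → ℂ) (hcard : Fintype.card ι = Fintype.card m ^ 2)
    (hnorm : ∀ k, cinner (ψ k) (ψ k) = 1)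
    (hover : ∀ k k', k ≠ k' → ‖cinner (ψ k) (ψ k')‖ ^ 2 = 1 / (Fintype.card m + 1)) :
    ∑ k, proj (ψ k) = (Fintype.card m : ℂ) • 1 := by
  set d : ℂ := (Fintype.card m : ℂ)
  have hd : d + 1 ≠ 0 := Nat.cast_add_one_ne_zero _
  have hterm : ∀ k k', (‖cinner (ψ k) (ψ k')‖ : ℂ) ^ 2
      = 1 / (d + 1) + if k = k' then d / (d + 1) else 0 := by
    intro k k'
    split_ifs with h
    · subst h
      rw [hnorm, norm_one, Complex.ofReal_one, one_pow, ← add_div, add_comm 1 d, div_self hd]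
    · rw [← Complex.ofReal_pow, hover k k' h]
      simp [d]
  have hrow : ∀ k, ∑ k', (‖cinner (ψ k) (ψ k')‖ : ℂ) ^ 2 = d := by
    intro k
    simp only [hterm, Finset.sum_add_distrib, Finset.sum_const, Finset.card_univ, hcard,
      nsmul_eq_mul, Nat.cast_pow, Finset.sum_ite_eq, Finset.mem_univ, if_true]
    field_simp
    ring
  set S := ∑ k, proj (ψ k)
  have hSh : Sᴴ = S := by simp [S, conjTranspose_sum, conjTranspose_proj]
  have htr : S.trace = d ^ 2 := by simp [S, trace_sum, trace_proj, hnorm, hcard, d]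
  have htr2 : (S * S).trace = d ^ 3 := by
    calc (S * S).trace = ∑ k, ∑ k', (proj (ψ k) * proj (ψ k')).trace := by
          simp only [S, Finset.sum_mul, Finset.mul_sum, trace_sum]
          exact Finset.sum_comm
      _ = d ^ 3 := by
          simp only [trace_proj_mul_proj, hrow, Finset.sum_const, Finset.card_univ, hcard,
            nsmul_eq_mul, Nat.cast_pow, d]
          ring
  have hzero : ((S - d • 1)ᴴ * (S - d • 1)).trace = 0 := by
    rw [conjTranspose_sub, hSh, conjTranspose_smul, conjTranspose_one]
    simp only [star_natCast, mul_sub, sub_mul, Algebra.smul_mul_assoc, one_mul,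
      Algebra.mul_smul_comm, mul_one, trace_sub, htr2, trace_smul, htr, smul_eq_mul, trace_one, d]
    ring
  exact sub_eq_zero.mp (trace_conjTranspose_mul_self_eq_zero_iff.mp hzero)

lemma IsSICPOVM.sum_proj {ψ : Fin 4 → Fin 2 → ℂ} (h : IsSICPOVM ψ) :
    ∑ k, proj (ψ k) = (2 : ℂ) • 1 := by
  have := sum_proj_eq_smul_one_of_equiangular ψ (by simp) h.1 fun k k' hk => by
    rw [h.2 k k' hk]; norm_num
  simpa using this

section ProductStates

variable {n : ℕ}

lemma cinner_prodState (ψ φ : Fin n → Fin 4 → Fin 2 → ℂ) (k l : Fin n → Fin 4) :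
    cinner (prodState ψ k) (prodState φ l) = ∏ i, cinner (ψ i (k i)) (φ i (l i)) := by
  simp only [cinner, prodState, map_prod, ← Finset.prod_mul_distrib]
  exact (Fintype.prod_sum fun i t => starRingEnd ℂ (ψ i (k i) t) * φ i (l i) t).symm

lemma proj_prodState_apply (ψ : Fin n → Fin 4 → Fin 2 → ℂ) (k : Fin n → Fin 4)
    (x y : Fin n → Fin 2) :
    proj (prodState ψ k) x y = ∏ i, proj (ψ i (k i)) (x i) (y i) := by
  simp [proj, prodState, vecMulVec_apply, Finset.prod_mul_distrib]

lemma sum_proj_prodState (ψ : Fin n → Fin 4 → Fin 2 → ℂ) (c : ℂ)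
    (h : ∀ i, ∑ t, proj (ψ i t) = c • 1) :
    ∑ k, proj (prodState ψ k) = c ^ n • 1 := by
  ext x y
  simp only [Matrix.sum_apply, proj_prodState_apply]
  rw [← Fintype.prod_sum (fun i t => proj (ψ i t) (x i) (y i))]
  simp only [← Matrix.sum_apply, h, Matrix.smul_apply, one_apply, smul_eq_mul, mul_ite, mul_one,
    mul_zero, Finset.prod_ite_zero, Finset.mem_univ, forall_const, funext_iff,
    Finset.prod_const, Finset.card_univ, Fintype.card_fin]

end ProductStates

lemma maxEnt_eq_smul_vec_one (n : ℕ) :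
    maxEnt n = (((Real.sqrt (2 ^ n))⁻¹ : ℝ) : ℂ) • vec (1 : Matrix (Fin n → Fin 2) _ ℂ) := by
  ext ⟨x, y⟩
  simp [maxEnt, one_apply, eq_comm]

lemma Gam_mulVec_vec_one {n : ℕ} {ψ : Fin n → Fin 4 → Fin 2 → ℂ}
    (hψ : ∀ k, cinner (prodState ψ k) (prodState ψ k) = 1) :
    (Gam ψ).mulVec (vec 1) = vec (∑ k, proj (prodState ψ k)) := by
  simp only [Gam, sum_mulVec, kronecker_mulVec_vec, Matrix.mul_one, transpose_transpose,
    proj_mul_self (hψ _), vec_sum]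

theorem Gam_mulVec_maxEnt_general (n : ℕ)
    (ψ : Fin n → Fin 4 → Fin 2 → ℂ) (hψ : ∀ i, IsSICPOVM (ψ i)) :
    (Gam ψ).mulVec (maxEnt n) = ((2 : ℂ) ^ n) • maxEnt n := by
  have hunit : ∀ k, cinner (prodState ψ k) (prodState ψ k) = 1 := fun k => by
    simp [cinner_prodState, (hψ _).1]
  rw [maxEnt_eq_smul_vec_one, mulVec_smul, Gam_mulVec_vec_one hunit,
    sum_proj_prodState ψ 2 fun i => (hψ i).sum_proj, vec_smul, smul_comm]

/-- `φ` is an eigenvector of `Γ` with eigenvalue `d = 2^n`. -/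
theorem Gam_mulVec_maxEnt (n : ℕ) (hn : 1 ≤ n)
    (ψ : Fin n → Fin 4 → Fin 2 → ℂ) (hψ : ∀ i, IsSICPOVM (ψ i)) :
    (Gam ψ).mulVec (maxEnt n) = ((2 : ℂ) ^ n) • maxEnt n :=
  Gam_mulVec_maxEnt_general n ψ hψ
end
end

section
/- Let n ≥ 1, d = 2^n, let Γ = Σ_k (ψ_k ψ_k†)^T ⊗ (ψ_k ψ_k†) be built from tensor products ψ_k = ψ_{1,k_1} ⊗ ⋯ ⊗ ψ_{n,k_n} of single-qubit SIC-POVM states, and let φ = (1/√d) Σ_{x=1}^d e_x ⊗ e_x ∈ ℂ^{d²}. Then the matrix A = φφ† − (3/(2d))·Γ + (1/2)·I is positive semidefinite, where I is the d²×d² identity. -/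
open Matrix Polynomial
open scoped Kronecker ComplexOrder Classical

noncomputable section

/-!
Write `Φ` for the projector onto the Bell state `(e₀₀ + e₁₁)/√2`. A single-qubit SIC-POVM is a
2-design: `Σ_k (ψ_k ψ_k†)ᵀ ⊗ ψ_k ψ_k† = 2Φ + (2/3)(1 - Φ)`, because the squared Frobenius norm
of the difference is a polynomial in the overlaps `⟨ψ_k, ψ_l⟩` which vanishes when
`|⟨ψ_k, ψ_l⟩|² = 1/3` for `k ≠ l`. Regrouping the `2n` tensor factors into `n` qubit pairs turns
`φφ†`, `Γ` and `I` into tensor products of `Φ` and `1 - Φ`; expanding, `A = Σ_T c_T ⊗ᵢ P_{T i}`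
over `T : Fin n → Bool`, with `P_true = Φ`, `P_false = 1 - Φ` and
`c_T = [T ≡ true] + 1/2 - (3/2)·3^(-#{i | T i = false})`. Every `c_T` is nonnegative (zero for
`T ≡ true`), and tensor products of PSD matrices are PSD.
-/

namespace Matrix

section piKronecker

variable {ι R : Type*} [Fintype ι] [CommSemiring R] {l m n : ι → Type*}

def piKronecker (M : ∀ i, Matrix (l i) (m i) R) : Matrix (∀ i, l i) (∀ i, m i) R :=
  of fun p q => ∏ i, M i (p i) (q i)

@[simp]
lemma piKronecker_apply (M : ∀ i, Matrix (l i) (m i) R) (p : ∀ i, l i) (q : ∀ i, m i) :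
    piKronecker M p q = ∏ i, M i (p i) (q i) :=
  rfl

lemma piKronecker_mul [DecidableEq ι] [∀ i, Fintype (m i)] (M : ∀ i, Matrix (l i) (m i) R)
    (N : ∀ i, Matrix (m i) (n i) R) :
    piKronecker (fun i => M i * N i) = piKronecker M * piKronecker N := by
  ext p q
  simp only [piKronecker_apply, mul_apply, Fintype.prod_sum, Finset.prod_mul_distrib]

lemma piKronecker_conjTranspose [StarRing R] (M : ∀ i, Matrix (l i) (m i) R) :
    piKronecker (fun i => (M i)ᴴ) = (piKronecker M)ᴴ := by
  ext p q
  simp [star_prod]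

lemma piKronecker_transpose (M : ∀ i, Matrix (l i) (m i) R) :
    piKronecker (fun i => (M i)ᵀ) = (piKronecker M)ᵀ :=
  rfl

lemma piKronecker_vecMulVec (u : ∀ i, l i → R) (v : ∀ i, m i → R) :
    piKronecker (fun i => vecMulVec (u i) (v i)) =
      vecMulVec (fun p => ∏ i, u i (p i)) (fun q => ∏ i, v i (q i)) := by
  ext p q
  simp [vecMulVec_apply, Finset.prod_mul_distrib]

lemma piKronecker_smul (c : ι → R) (M : ∀ i, Matrix (l i) (m i) R) :
    piKronecker (fun i => c i • M i) = (∏ i, c i) • piKronecker M := by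
  ext p q
  simp [Finset.prod_mul_distrib]

lemma piKronecker_sum [DecidableEq ι] {κ : Type*} [Fintype κ]
    (M : ∀ i, κ → Matrix (l i) (m i) R) :
    piKronecker (fun i => ∑ j, M i j) = ∑ T : ι → κ, piKronecker fun i => M i (T i) := by
  ext p q
  simp [sum_apply, Fintype.prod_sum]

lemma piKronecker_one [∀ i, DecidableEq (m i)] [DecidableEq (∀ i, m i)] :
    piKronecker (fun i => (1 : Matrix (m i) (m i) R)) = 1 := by
  ext p q
  simp only [piKronecker_apply, one_apply, Fintype.prod_ite_zero, Finset.prod_const_one,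
    funext_iff]

lemma submatrix_kronecker_piKronecker {l' m' : ι → Type*} (M : ∀ i, Matrix (l i) (m i) R)
    (N : ∀ i, Matrix (l' i) (m' i) R) :
    (piKronecker M ⊗ₖ piKronecker N).submatrix (Equiv.arrowProdEquivProdArrow ι l l')
      (Equiv.arrowProdEquivProdArrow ι m m') = piKronecker fun i => M i ⊗ₖ N i := by
  ext p q
  simp [Finset.prod_mul_distrib]

end piKronecker

open scoped MatrixOrder in
lemma PosSemidef.piKronecker {𝕜 ι : Type*} [RCLike 𝕜] [Fintype ι] [DecidableEq ι]
    {m : ι → Type*} [∀ i, Fintype (m i)] [∀ i, DecidableEq (m i)] {M : ∀ i, Matrix (m i) (m i) 𝕜}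
    (hM : ∀ i, (M i).PosSemidef) : (piKronecker M).PosSemidef := by
  choose B hB using fun i => CStarAlgebra.nonneg_iff_eq_star_mul_self.mp (hM i).nonneg
  have hfactor : Matrix.piKronecker M = (Matrix.piKronecker B)ᴴ * Matrix.piKronecker B := by
    rw [← piKronecker_conjTranspose, ← piKronecker_mul]
    exact congrArg Matrix.piKronecker (funext hB)
  rw [hfactor]
  exact posSemidef_conjTranspose_mul_self _

end Matrix

open scoped MatrixOrder in
lemma IsStarProjection.posSemidef {𝕜 n : Type*} [RCLike 𝕜] [Fintype n] [DecidableEq n]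
    {P : Matrix n n 𝕜} (hP : IsStarProjection P) : P.PosSemidef :=
  hP.nonneg.posSemidef

lemma isStarProjection_proj {m : Type*} [Fintype m] {v : m → ℂ} (hv : star v ⬝ᵥ v = 1) :
    IsStarProjection (proj v) where
  isIdempotentElem := by
    rw [IsIdempotentElem, proj, vecMulVec_mul_vecMulVec, hv, one_smul]
  isSelfAdjoint := by
    rw [IsSelfAdjoint, proj, star_eq_conjTranspose, conjTranspose_vecMulVec, star_star]

def bellState : Fin 2 × Fin 2 → ℂ :=
  fun p => if p.1 = p.2 then (((Real.sqrt 2)⁻¹ : ℝ) : ℂ) else 0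

lemma proj_ite_fst_eq_snd_apply {m : Type*} [DecidableEq m] {c : ℝ} (hc : 0 ≤ c) (p q : m × m) :
    proj (fun p : m × m => if p.1 = p.2 then (((Real.sqrt c)⁻¹ : ℝ) : ℂ) else 0) p q =
      if p.1 = p.2 ∧ q.1 = q.2 then (c : ℂ)⁻¹ else 0 := by
  have hsq : ((Real.sqrt c : ℂ))⁻¹ * (Real.sqrt c : ℂ)⁻¹ = (c : ℂ)⁻¹ := by
    rw [← mul_inv, ← Complex.ofReal_mul, Real.mul_self_sqrt hc]
  by_cases hp : p.1 = p.2 <;> by_cases hq : q.1 = q.2 <;>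
    simp [proj, vecMulVec_apply, hp, hq, hsq, Complex.conj_ofReal]

lemma proj_bellState_apply (p q : Fin 2 × Fin 2) :
    proj bellState p q = if p.1 = p.2 ∧ q.1 = q.2 then 1 / 2 else 0 := by
  have h : proj bellState p q = if p.1 = p.2 ∧ q.1 = q.2 then ((2 : ℝ) : ℂ)⁻¹ else 0 :=
    proj_ite_fst_eq_snd_apply zero_le_two p q
  rw [h]
  norm_num

def qubitGam (φ : Fin 4 → Fin 2 → ℂ) : Matrix (Fin 2 × Fin 2) (Fin 2 × Fin 2) ℂ :=
  ∑ k, (proj (φ k))ᵀ ⊗ₖ proj (φ k)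

lemma qubitGam_sub_apply (φ : Fin 4 → Fin 2 → ℂ) (a b c d : Fin 2) :
    (qubitGam φ - ((2 : ℂ) • proj bellState + (2 / 3 : ℂ) • (1 - proj bellState))) (a, b) (c, d) =
      ∑ k, starRingEnd ℂ (φ k a) * φ k b * φ k c * starRingEnd ℂ (φ k d) -
        2 / 3 * ((if a = b ∧ c = d then 1 else 0) + (if a = c ∧ b = d then 1 else 0)) := by
  simp only [Matrix.sub_apply, Matrix.smul_apply, Matrix.add_apply, proj_bellState_apply]
  simp only [one_apply, Prod.mk.injEq, qubitGam, Matrix.sum_apply, kroneckerMap_apply,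
    transpose_apply, proj, vecMulVec_apply, Pi.star_apply, RCLike.star_def, smul_eq_mul]
  congr 1
  · exact Finset.sum_congr rfl fun k _ => by ring
  · split_ifs <;> ring

lemma trace_conjTranspose_mul_self_qubitGam_sub (φ : Fin 4 → Fin 2 → ℂ) :
    ((qubitGam φ - ((2 : ℂ) • proj bellState + (2 / 3 : ℂ) • (1 - proj bellState)))ᴴ *
        (qubitGam φ - ((2 : ℂ) • proj bellState + (2 / 3 : ℂ) • (1 - proj bellState)))).trace =
      ∑ k, ∑ k', (cinner (φ k) (φ k') * starRingEnd ℂ (cinner (φ k) (φ k'))) ^ 2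
        - 8 / 3 * ∑ k, cinner (φ k) (φ k) ^ 2 + 16 / 3 := by
  simp only [trace, diag_apply, mul_apply, conjTranspose_apply, Fintype.sum_prod_type,
    qubitGam_sub_apply, RCLike.star_def, map_sub, map_add, map_mul, map_ofNat, map_div₀,
    apply_ite, map_one, map_zero, Complex.conj_conj, cinner, Fin.sum_univ_two, Fin.sum_univ_four]
  norm_num
  ring

lemma qubitGam_eq_of_isSICPOVM {φ : Fin 4 → Fin 2 → ℂ} (hφ : IsSICPOVM φ) :
    qubitGam φ = (2 : ℂ) • proj bellState + (2 / 3 : ℂ) • (1 - proj bellState) := by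
  obtain ⟨hnorm, hoverlap⟩ := hφ
  have hpair (k k' : Fin 4) :
      (cinner (φ k) (φ k') * starRingEnd ℂ (cinner (φ k) (φ k'))) ^ 2 =
        if k = k' then 1 else 1 / 9 := by
    split_ifs with h
    · simp [h, hnorm]
    · rw [Complex.mul_conj, ← Complex.sq_norm, hoverlap k k' h]
      norm_num
  rw [← sub_eq_zero, ← trace_conjTranspose_mul_self_eq_zero_iff,
    trace_conjTranspose_mul_self_qubitGam_sub]
  simp only [hpair, hnorm, one_pow, Fin.sum_univ_four, Fin.reduceEq, ↓reduceIte]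
  norm_num

lemma proj_maxEnt_submatrix (n : ℕ) :
    (proj (maxEnt n)).submatrix (Equiv.arrowProdEquivProdArrow (Fin n) _ _)
      (Equiv.arrowProdEquivProdArrow (Fin n) _ _) = piKronecker fun _ => proj bellState := by
  ext p q
  have hmaxEnt (p q : (Fin n → Fin 2) × (Fin n → Fin 2)) :
      proj (maxEnt n) p q = if p.1 = p.2 ∧ q.1 = q.2 then (((2 : ℝ) ^ n : ℝ) : ℂ)⁻¹ else 0 :=
    proj_ite_fst_eq_snd_apply (by positivity) p q
  simp [hmaxEnt, proj_bellState_apply, Fintype.prod_ite_zero, funext_iff, forall_and]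

lemma proj_prodState {n : ℕ} (ψ : Fin n → Fin 4 → Fin 2 → ℂ) (k : Fin n → Fin 4) :
    proj (prodState ψ k) = piKronecker fun i => proj (ψ i (k i)) := by
  simp only [proj, piKronecker_vecMulVec]
  congr
  funext x
  simp [prodState, star_prod]

lemma Gam_submatrix {n : ℕ} (ψ : Fin n → Fin 4 → Fin 2 → ℂ) :
    (Gam ψ).submatrix (Equiv.arrowProdEquivProdArrow (Fin n) _ _)
      (Equiv.arrowProdEquivProdArrow (Fin n) _ _) = piKronecker fun i => qubitGam (ψ i) := by
  simp only [qubitGam, piKronecker_sum, Gam, proj_prodState, ← piKronecker_transpose,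
    ← submatrix_kronecker_piKronecker]
  ext p q
  simp [Matrix.sum_apply]

lemma star_bellState_dotProduct_self : star bellState ⬝ᵥ bellState = 1 := by
  have h (p : Fin 2 × Fin 2) : star (bellState p) * bellState p = proj bellState p p := by
    rw [proj, vecMulVec_apply, Pi.star_apply, mul_comm]
  simp only [dotProduct, Pi.star_apply, h, proj_bellState_apply, Fintype.sum_prod_type,
    Fin.sum_univ_two]
  norm_num

def bellSpectralProj (b : Bool) : Matrix (Fin 2 × Fin 2) (Fin 2 × Fin 2) ℂ :=
  if b then proj bellState else 1 - proj bellState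

lemma posSemidef_bellSpectralProj (b : Bool) : (bellSpectralProj b).PosSemidef := by
  have hP := isStarProjection_proj star_bellState_dotProduct_self
  cases b
  · exact hP.one_sub.posSemidef
  · exact hP.posSemidef

lemma piKronecker_eq_sum_bellSpectralProj {ι : Type*} [Fintype ι] [DecidableEq ι] (x y : ℂ) :
    piKronecker (fun _ : ι => x • proj bellState + y • (1 - proj bellState)) =
      ∑ T : ι → Bool,
        (∏ i, if T i then x else y) • piKronecker fun i => bellSpectralProj (T i) := by
  have hsplit : x • proj bellState + y • (1 - proj bellState) =
      ∑ b, (if b then x else y) • bellSpectralProj b := by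
    simp [bellSpectralProj]
  simp only [hsplit, piKronecker_sum, piKronecker_smul]

def bellCoeff {ι : Type*} [Fintype ι] (T : ι → Bool) : ℝ :=
  ∏ i, (if T i then 1 else 0) + 1 / 2 - 3 / 2 * ∏ i, if T i then 1 else 1 / 3

lemma bellCoeff_nonneg {ι : Type*} [Fintype ι] (T : ι → Bool) : 0 ≤ bellCoeff T := by
  unfold bellCoeff
  by_cases hT : ∀ i, T i
  · norm_num [hT]
  · obtain ⟨i, hi⟩ := not_forall.mp hT
    have hzero : ∏ j, (if T j then (1 : ℝ) else 0) = 0 :=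
      Finset.prod_eq_zero (Finset.mem_univ i) (by simp [hi])
    have hsmall : ∏ j, (if T j then (1 : ℝ) else 1 / 3) ≤ 1 / 3 := by
      have hrest : ∏ j ∈ Finset.univ.erase i, (if T j then (1 : ℝ) else 1 / 3) ≤ 1 :=
        Finset.prod_le_one (fun j _ => by split_ifs <;> norm_num)
          (fun j _ => by split_ifs <;> norm_num)
      rw [← Finset.mul_prod_erase _ _ (Finset.mem_univ i), if_neg hi]
      linarith
    linarith

lemma ofReal_bellCoeff {n : ℕ} (T : Fin n → Bool) :
    (bellCoeff T : ℂ) = ∏ i, (if T i then 1 else 0) -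
      3 / (2 * 2 ^ n) * ∏ i, (if T i then 2 else 2 / 3) + 1 / 2 * ∏ i, (if T i then 1 else 1) := by
  have hscale : ∏ i, (if T i then (2 : ℂ) else 2 / 3) = 2 ^ n * ∏ i, if T i then 1 else 1 / 3 := by
    rw [← Fin.prod_const, ← Finset.prod_mul_distrib]
    exact Finset.prod_congr rfl fun i _ => by split_ifs <;> norm_num
  simp only [bellCoeff, hscale, Complex.ofReal_add, Complex.ofReal_sub, Complex.ofReal_mul,
    Complex.ofReal_prod, apply_ite Complex.ofReal, ite_self, Finset.prod_const_one]
  field_simp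
  push_cast
  ring

theorem A_posSemidef_general (n : ℕ)
    (ψ : Fin n → Fin 4 → Fin 2 → ℂ) (hψ : ∀ i, IsSICPOVM (ψ i)) :
    (proj (maxEnt n) - (3 / (2 * (2 : ℂ) ^ n)) • Gam ψ
      + ((1 : ℂ) / 2) • (1 : Matrix ((Fin n → Fin 2) × (Fin n → Fin 2))
          ((Fin n → Fin 2) × (Fin n → Fin 2)) ℂ)).PosSemidef := by
  have hbell := piKronecker_eq_sum_bellSpectralProj (ι := Fin n) 1 0
  have hone := piKronecker_eq_sum_bellSpectralProj (ι := Fin n) 1 1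
  simp only [one_smul, zero_smul, add_zero, add_sub_cancel, piKronecker_one] at hbell hone
  rw [← posSemidef_submatrix_equiv (Equiv.arrowProdEquivProdArrow (Fin n) _ _)]
  simp only [submatrix_add, submatrix_sub, submatrix_smul, Pi.add_apply, Pi.sub_apply,
    Pi.smul_apply, proj_maxEnt_submatrix, Gam_submatrix, submatrix_one_equiv]
  simp_rw [qubitGam_eq_of_isSICPOVM (hψ _)]
  rw [hbell, hone, piKronecker_eq_sum_bellSpectralProj]
  simp only [Finset.smul_sum, smul_smul, ← Finset.sum_sub_distrib, ← Finset.sum_add_distrib,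
    ← add_smul, ← sub_smul, ← ofReal_bellCoeff]
  exact posSemidef_sum _ fun T _ =>
    (PosSemidef.piKronecker fun i => posSemidef_bellSpectralProj (T i)).smul
      (Complex.zero_le_real.mpr (bellCoeff_nonneg T))

/-- The matrix `A = φφ† - (3/(2d))Γ + (1/2)I` is positive semidefinite. -/
theorem A_posSemidef (n : ℕ) (hn : 1 ≤ n)
    (ψ : Fin n → Fin 4 → Fin 2 → ℂ) (hψ : ∀ i, IsSICPOVM (ψ i)) :
    (proj (maxEnt n) - (3 / (2 * (2 : ℂ) ^ n)) • Gam ψ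
      + ((1 : ℂ) / 2) • (1 : Matrix ((Fin n → Fin 2) × (Fin n → Fin 2))
          ((Fin n → Fin 2) × (Fin n → Fin 2)) ℂ)).PosSemidef :=
  A_posSemidef_general n ψ hψ
end
end
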